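/- Let X and Y be topological spaces, let n ≥ 2, let k ≥ 1, and let φ₁, …, φₙ : Y → X be continuous maps. Then the following are equivalent: (i) there exist open sets U₁, …, U_k covering Y and, for each j ∈ {1, …, k}, a continuous map g_j : U_j → C([0,1], X) such that for every a ∈ U_j and every i ∈ {1, …, n} one has g_j(a)((i−1)/(n−1)) = φᵢ(a); (ii) there exist open sets V₁, …, V_k covering Y such that for every j ∈ {1, …, k} and all i, l ∈ {1, …, n}, the restrictions of φᵢ and φ_l to V_j are homotopic as continuous maps V_j → X. -/

import Mathlib

/-!
A local section `g` over `U` is a continuous family of paths, and sliding the evaluation time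
along `[0,1]` is a homotopy between any two of the `φᵢ` on `U`. Conversely, homotopies
`φ₁ ≃ φ₂ ≃ ⋯ ≃ φₙ` on `V` are glued one after another on the intervals `[i, i+1]` of the real
line, and the glued map, rescaled from `[0, n-1]` to `[0,1]`, is the required section.
-/

open Set unitInterval

instance unitInterval.pathConnectedSpace : PathConnectedSpace I :=
  isPathConnected_iff_pathConnectedSpace.mp
    ((convex_Icc (0 : ℝ) 1).isPathConnected (nonempty_Icc.2 zero_le_one))

theorem ContinuousMap.homotopic_of_joined {A T X : Type*} [TopologicalSpace A]
    [TopologicalSpace T] [TopologicalSpace X] [LocallyCompactPair T X]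
    (g : C(A, C(T, X))) {s t : T} (hst : Joined s t) :
    (⟨fun a => g a s, by fun_prop⟩ : C(A, X)).Homotopic ⟨fun a => g a t, by fun_prop⟩ :=
  ⟨{ toFun := fun p => g p.2 (hst.somePath p.1)
     continuous_toFun := by fun_prop
     map_zero_left := by simp
     map_one_left := by simp }⟩

theorem ContinuousMap.exists_continuous_through_of_homotopic {A X : Type*} [TopologicalSpace A]
    [TopologicalSpace X] (f : ℕ → C(A, X)) (m : ℕ) (h : ∀ i < m, (f i).Homotopic (f (i + 1))) :
    ∃ F : C(ℝ × A, X), ∀ i ≤ m, ∀ a, F ((i : ℝ), a) = f i a := by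
  induction m with
  | zero => exact ⟨(f 0).comp ContinuousMap.snd, by simp⟩
  | succ m ih =>
    obtain ⟨F, hF⟩ := ih fun i hi => h i (by omega)
    let H := (h m (by omega)).some
    refine ⟨⟨fun p => if p.1 ≤ m then F p else H (projIcc 0 1 zero_le_one (p.1 - m), p.2), ?_⟩, ?_⟩
    · refine Continuous.if_le (by fun_prop) ?_ (by fun_prop) (by fun_prop) fun p hp => ?_
      · exact H.continuous.comp ((continuous_projIcc.comp (by fun_prop)).prodMk continuous_snd)
      · obtain ⟨x, a⟩ := p
        obtain rfl : x = m := hp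
        simp [hF m le_rfl]
    · intro i hi a
      rcases hi.lt_or_eq with hi | rfl
      · have : (i : ℝ) ≤ m := by exact_mod_cast Nat.lt_succ_iff.mp hi
        simp [this, hF i (by omega)]
      · simp

theorem natCast_div_sub_one_mem_unitInterval {n : ℕ} (i : Fin n) :
    ((i : ℕ) : ℝ) / ((n : ℝ) - 1) ∈ I := by
  have hi : ((i : ℕ) : ℝ) ≤ (n : ℝ) - 1 := by
    rw [le_sub_iff_add_le]; exact_mod_cast i.isLt
  have hpos : (0 : ℝ) ≤ (n : ℝ) - 1 := (Nat.cast_nonneg _).trans hi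
  exact ⟨div_nonneg (Nat.cast_nonneg _) hpos, div_le_one_of_le₀ hi hpos⟩

theorem statement0_general {X Y : Type*} [TopologicalSpace X] [TopologicalSpace Y]
    (n k : ℕ) (hn : 2 ≤ n) (φ : Fin n → C(Y, X)) :
    (∃ U : Fin k → Set Y, (∀ j, IsOpen (U j)) ∧ (⋃ j, U j) = Set.univ ∧
      ∀ j, ∃ g : C(U j, C(unitInterval, X)),
        ∀ (a : U j) (i : Fin n) (t : unitInterval),
          (t : ℝ) = ((i : ℕ) : ℝ) / ((n : ℝ) - 1) → g a t = φ i a) ↔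
    (∃ V : Fin k → Set Y, (∀ j, IsOpen (V j)) ∧ (⋃ j, V j) = Set.univ ∧
      ∀ j (i l : Fin n),
        ((φ i).restrict (V j)).Homotopic ((φ l).restrict (V j))) := by
  constructor
  · rintro ⟨U, hU, hcover, hg⟩
    refine ⟨U, hU, hcover, fun j i l => ?_⟩
    obtain ⟨g, hg⟩ := hg j
    have hφ : ∀ i : Fin n, (φ i).restrict (U j) =
        ⟨fun a => g a ⟨_, natCast_div_sub_one_mem_unitInterval i⟩, by fun_prop⟩ :=
      fun i => ContinuousMap.ext fun a => (hg a i _ rfl).symm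
    rw [hφ, hφ]
    exact g.homotopic_of_joined (PathConnectedSpace.joined _ _)
  · rintro ⟨V, hV, hcover, hhom⟩
    refine ⟨V, hV, hcover, fun j => ?_⟩
    let clamp : ℕ → Fin n := fun i => ⟨min i (n - 1), by omega⟩
    obtain ⟨F, hF⟩ := ContinuousMap.exists_continuous_through_of_homotopic
      (fun i => (φ (clamp i)).restrict (V j)) (n - 1) fun i _ => hhom j _ _
    refine ⟨(F.comp ⟨fun p => (((n : ℝ) - 1) * p.2, p.1), by fun_prop⟩).curry,
      fun a i t ht => ?_⟩
    have hn' : (n : ℝ) - 1 ≠ 0 := by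
      rw [sub_ne_zero]; exact_mod_cast (by omega : n ≠ 1)
    have hclamp : clamp i = i := Fin.ext (by simp only [clamp]; omega)
    simpa [ht, mul_div_cancel₀ _ hn', hclamp] using hF i (by omega) a

/-- For continuous maps `φ₁, …, φₙ : Y → X` (indexed here by `Fin n`,
with time points `(i-1)/(n-1)` written as `i/(n-1)` for `i : Fin n`), having an open
cover `U₁, …, U_k` of `Y` with continuous local sections `g_j : U_j → C([0,1], X)`
passing through the `φᵢ` at the prescribed times is equivalent to having an open
cover `V₁, …, V_k` of `Y` on each piece of which all the `φᵢ` are mutually homotopic. -/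
theorem statement0 {X Y : Type*} [TopologicalSpace X] [TopologicalSpace Y]
    (n k : ℕ) (hn : 2 ≤ n) (hk : 1 ≤ k) (φ : Fin n → C(Y, X)) :
    (∃ U : Fin k → Set Y, (∀ j, IsOpen (U j)) ∧ (⋃ j, U j) = Set.univ ∧
      ∀ j, ∃ g : C(U j, C(unitInterval, X)),
        ∀ (a : U j) (i : Fin n) (t : unitInterval),
          (t : ℝ) = ((i : ℕ) : ℝ) / ((n : ℝ) - 1) → g a t = φ i a) ↔
    (∃ V : Fin k → Set Y, (∀ j, IsOpen (V j)) ∧ (⋃ j, V j) = Set.univ ∧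
      ∀ j (i l : Fin n),
        ((φ i).restrict (V j)).Homotopic ((φ l).restrict (V j))) :=
  statement0_general n k hn φ
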